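/- Let k be a field of characteristic p > 0 and ξ ∈ k^× with ξ^(p^σ) = ξ^(-1) for a positive integer σ. If m is the smallest non-negative integer with ξ^(p^m) = ξ^(-1) and m > 0, then m divides σ and σ/m is odd. -/
import Mathlib

private lemma fix_iter {k : Type*} [Field k] {p : ℕ} (ξ : kˣ) {a : ℕ}
    (h : ξ ^ (p ^ a) = ξ) : ∀ n : ℕ, ξ ^ (p ^ (a * n)) = ξ := by
  intro n
  induction n with
  | zero => simp
  | succ n ih =>
    have ha : a * (n + 1) = a * n + a := by ring
    rw [ha, pow_add, pow_mul, ih, h]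

/-- Let `k` be a field of characteristic `p > 0` and `ξ ∈ kˣ` with `ξ^(p^σ) = ξ⁻¹` for a
positive integer `σ`. If `m` is the smallest non-negative integer with `ξ^(p^m) = ξ⁻¹`
and `m > 0`, then `m` divides `σ` and `σ/m` is odd. -/
theorem minimal_exponent_dvd
    (k : Type*) [Field k] (p : ℕ) [Fact p.Prime] [CharP k p]
    (ξ : kˣ) (σ m : ℕ) (hσ : 0 < σ) (hξσ : ξ ^ (p ^ σ) = ξ⁻¹)
    (hm : 0 < m) (hξm : ξ ^ (p ^ m) = ξ⁻¹)
    (hmin : ∀ j : ℕ, ξ ^ (p ^ j) = ξ⁻¹ → m ≤ j) :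
    m ∣ σ ∧ Odd (σ / m) := by
  have h2m : ξ ^ (p ^ (2 * m)) = ξ := by
    rw [two_mul, pow_add, pow_mul, hξm, inv_pow, hξm, inv_inv]
  set q := σ / (2 * m) with hq
  set r := σ % (2 * m) with hr
  have hdecomp : 2 * m * q + r = σ := Nat.div_add_mod σ (2 * m)
  have hrlt : r < 2 * m := Nat.mod_lt σ (by omega)
  have hξr : ξ ^ (p ^ r) = ξ⁻¹ := by
    rw [← hξσ, ← hdecomp, pow_add, pow_mul, fix_iter ξ h2m q]
  have hmr : m ≤ r := hmin r hξr
  have hrm : r = m := by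
    by_contra hne
    have hlt : m < r := lt_of_le_of_ne hmr (Ne.symm hne)
    set t := r - m with ht
    have htpos : 0 < t := by omega
    have htlt : t < m := by omega
    have hfix : ξ ^ (p ^ t) = ξ := by
      have : ξ ^ (p ^ r) = (ξ ^ (p ^ t))⁻¹ := by
        have hrt : r = m + t := by omega
        rw [hrt, pow_add, pow_mul, hξm, inv_pow]
      rw [hξr] at this
      exact inv_injective this.symm
    -- write m = t * (m / t) + m % t
    have hms : t * (m / t) + m % t = m := Nat.div_add_mod m t
    have hξs : ξ ^ (p ^ (m % t)) = ξ⁻¹ := by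
      rw [← hξm]
      conv_rhs => rw [← hms]
      rw [pow_add, pow_mul, fix_iter ξ hfix (m / t)]
    have := hmin (m % t) hξs
    have := Nat.mod_lt m htpos
    omega
  clear_value q r
  rw [hrm] at hdecomp
  have hdvd : m ∣ σ := ⟨2 * q + 1, by rw [← hdecomp]; ring⟩
  refine ⟨hdvd, ?_⟩
  have : σ / m = 2 * q + 1 := by
    have : σ = m * (2 * q + 1) := by rw [← hdecomp]; ring
    rw [this, Nat.mul_div_cancel_left _ hm]
  rw [this]
  exact ⟨q, by ring⟩
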